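/- arXiv:2008.08262 — 6 statements merged into one kernel-verified Lean document; each statement's English description precedes it below -/
import Mathlib

section
/- There exists u with 0.94 < u < 0.95 such that −log(1−u) = 2 ∑_{k=1}^∞ u^k/k². Moreover, at u = 0.94 one has −log(1−u) < 2 ∑_{k=1}^∞ u^k/k² (the herd-immunity condition holds), while at u = 0.95 one has −log(1−u) > 2 ∑_{k=1}^∞ u^k/k² (it fails). -/
open Real Finset Nat Set

private lemma summable_aux' {u : ℝ} (h0 : 0 ≤ u) (h1 : u < 1) :
    Summable (fun k : ℕ => u ^ (k + 1) / ((k : ℝ) + 1) ^ 2) := by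
  have hg : Summable (fun k : ℕ => u ^ (k + 1)) := by
    have := (summable_geometric_of_lt_one h0 h1).mul_right u
    refine this.congr fun k => ?_
    rw [pow_succ]
  refine Summable.of_nonneg_of_le (fun k => by positivity) (fun k => ?_) hg
  apply _root_.div_le_self (by positivity)
  have : (0:ℝ) ≤ (k:ℝ) := Nat.cast_nonneg k
  nlinarith

private lemma exp_lt_inv_one_sub' {x : ℝ} (h0 : 0 < x) (h1 : x < 1) :
    Real.exp x < (1 - x)⁻¹ := by
  have h := Real.add_one_lt_exp (x := -x) (by linarith)
  rw [Real.exp_neg] at h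
  have hpos : (0:ℝ) < 1 - x := by linarith
  have h2 : (1 - x) * Real.exp x < 1 := by
    have := mul_lt_mul_of_pos_right h (Real.exp_pos x)
    rw [inv_mul_cancel₀ (ne_of_gt (Real.exp_pos x))] at this
    linarith
  rw [inv_eq_one_div, lt_div_iff₀ hpos]
  nlinarith [Real.exp_pos x]

private lemma log94' : Real.log (1 - 0.94) > -2.8165 := by
  have h : (0:ℝ) < 1 - 0.94 := by norm_num
  rw [gt_iff_lt, Real.lt_log_iff_exp_lt h, Real.exp_neg]
  have hexp : (50/3 : ℝ) < Real.exp 2.8165 := by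
    calc (50/3 : ℝ) < ∑ i ∈ Finset.range 10, (2.8165:ℝ) ^ i / i ! := by
          norm_num [Finset.sum_range_succ, Nat.factorial]
      _ ≤ Real.exp 2.8165 := Real.sum_le_exp_of_nonneg (by norm_num) 10
  have h2 : (Real.exp 2.8165)⁻¹ < (50/3 : ℝ)⁻¹ :=
    inv_strictAnti₀ (by norm_num) hexp
  calc (Real.exp 2.8165)⁻¹ < (50/3 : ℝ)⁻¹ := h2
    _ ≤ 1 - 0.94 := by norm_num

private lemma log95' : Real.log (1 - 0.95) < -2.9 := by
  have h : (0:ℝ) < 1 - 0.95 := by norm_num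
  rw [Real.log_lt_iff_lt_exp h, Real.exp_neg]
  have hexp : Real.exp 2.9 < 20 := by
    have e1 : Real.exp 2.9 = Real.exp 1 * Real.exp 1 * Real.exp 0.15 ^ 6 := by
      rw [← Real.exp_nat_mul, ← Real.exp_add, ← Real.exp_add]
      norm_num
    have h1 : Real.exp 1 < 2.7182818286 := Real.exp_one_lt_d9
    have h2 : Real.exp 0.15 < (1 - 0.15)⁻¹ := exp_lt_inv_one_sub' (by norm_num) (by norm_num)
    have h2' : Real.exp 0.15 < 20/17 := by
      have he : ((1:ℝ) - 0.15)⁻¹ = 20/17 := by norm_num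
      linarith [h2, he.le, he.ge]
    calc Real.exp 2.9 = Real.exp 1 * Real.exp 1 * Real.exp 0.15 ^ 6 := e1
      _ < 2.7182818286 * 2.7182818286 * (20/17) ^ 6 := by
          have e0 := Real.exp_pos (1:ℝ)
          have e15 := Real.exp_pos (0.15:ℝ)
          gcongr
      _ < 20 := by norm_num
  have : ((20:ℝ))⁻¹ < (Real.exp 2.9)⁻¹ := inv_strictAnti₀ (Real.exp_pos _) hexp
  calc (1:ℝ) - 0.95 = (20:ℝ)⁻¹ := by norm_num
    _ < (Real.exp 2.9)⁻¹ := this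

private lemma li2_94_lb' : (2.8165 : ℝ) < 2 * ∑' k : ℕ, (0.94 : ℝ) ^ (k + 1) / ((k : ℝ) + 1) ^ 2 := by
  have hs := summable_aux' (u := 0.94) (by norm_num) (by norm_num)
  have hle : ∑ k ∈ Finset.range 40, (0.94 : ℝ) ^ (k + 1) / ((k : ℝ) + 1) ^ 2
      ≤ ∑' k : ℕ, (0.94 : ℝ) ^ (k + 1) / ((k : ℝ) + 1) ^ 2 :=
    Summable.sum_le_tsum _ (fun k _ => by positivity) hs
  have hnum : (2.8165 : ℝ) / 2 < ∑ k ∈ Finset.range 40, (0.94 : ℝ) ^ (k + 1) / ((k : ℝ) + 1) ^ 2 := by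
    norm_num [Finset.sum_range_succ]
  linarith

private lemma li2_95_ub' : 2 * ∑' k : ℕ, (0.95 : ℝ) ^ (k + 1) / ((k : ℝ) + 1) ^ 2 < (2.9 : ℝ) := by
  have hs := summable_aux' (u := 0.95) (by norm_num) (by norm_num)
  have hsplit := Summable.sum_add_tsum_nat_add 21 hs
  set a : ℕ → ℝ := fun k => (0.95 : ℝ) ^ (k + 1) / ((k : ℝ) + 1) ^ 2 with ha
  have htail : ∑' k : ℕ, a (k + 21) ≤ (0.95:ℝ)^22 / 484 * (1 - 0.95)⁻¹ := by
    have hg : Summable (fun k : ℕ => (0.95:ℝ)^22 / 484 * (0.95:ℝ) ^ k) :=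
      (summable_geometric_of_lt_one (by norm_num) (by norm_num)).mul_left _
    have hb : ∀ k : ℕ, a (k + 21) ≤ (0.95:ℝ)^22 / 484 * (0.95:ℝ) ^ k := by
      intro k
      have hd : (484:ℝ) ≤ (((k + 21 : ℕ) : ℝ) + 1) ^ 2 := by
        have : (0:ℝ) ≤ (k:ℝ) := Nat.cast_nonneg k
        push_cast
        nlinarith
      calc a (k + 21) ≤ (0.95 : ℝ) ^ (k + 21 + 1) / 484 := by
            apply div_le_div₀ (by positivity) le_rfl (by norm_num) hd
        _ = (0.95:ℝ)^22 / 484 * (0.95:ℝ) ^ k := by ring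
    calc ∑' k : ℕ, a (k + 21) ≤ ∑' k : ℕ, (0.95:ℝ)^22 / 484 * (0.95:ℝ) ^ k :=
          Summable.tsum_le_tsum hb ((summable_nat_add_iff 21).mpr hs) hg
      _ = (0.95:ℝ)^22 / 484 * (1 - 0.95)⁻¹ := by
          rw [tsum_mul_left, tsum_geometric_of_lt_one (by norm_num) (by norm_num)]
  have hhead : ∑ k ∈ Finset.range 21, a k < 1.4348 := by
    norm_num [ha, Finset.sum_range_succ]
  have htb : (0.95:ℝ)^22 / 484 * (1 - 0.95)⁻¹ < 0.0134 := by norm_num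
  have : ∑' k : ℕ, a k < 1.4348 + 0.0134 := by
    rw [← hsplit]
    simp only [ha] at htail ⊢
    push_cast at htail ⊢
    linarith
  linarith

private noncomputable def cl (x : ℝ) : ℝ := max 0 (min x 0.95)

private lemma cl_nonneg (x : ℝ) : 0 ≤ cl x := le_max_left _ _
private lemma cl_le (x : ℝ) : cl x ≤ 0.95 := max_le (by norm_num) (min_le_right _ _)
private lemma cl_eq {x : ℝ} (h1 : 0.94 ≤ x) (h2 : x ≤ 0.95) : cl x = x := by
  rw [cl, min_eq_left h2, max_eq_right (by linarith)]

private lemma cont_G' : Continuous (fun x : ℝ => ∑' k : ℕ, (cl x) ^ (k + 1) / ((k : ℝ) + 1) ^ 2) := by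
  have hcl : Continuous cl := continuous_const.max (continuous_id.min continuous_const)
  apply continuous_tsum (u := fun k : ℕ => (0.95 : ℝ) ^ (k + 1))
  · exact fun k => ((hcl.pow _).div_const _)
  · have := summable_geometric_of_lt_one (r := (0.95:ℝ)) (by norm_num) (by norm_num)
    refine (this.mul_right 0.95).congr fun k => ?_
    rw [pow_succ]
  · intro k x
    rw [Real.norm_eq_abs, abs_of_nonneg (div_nonneg (pow_nonneg (cl_nonneg x) _) (by positivity))]
    calc cl x ^ (k+1) / ((k:ℝ)+1)^2 ≤ cl x ^ (k+1) := by
          apply _root_.div_le_self (pow_nonneg (cl_nonneg x) _)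
          have : (0:ℝ) ≤ (k:ℝ) := Nat.cast_nonneg k
          nlinarith
      _ ≤ (0.95:ℝ) ^ (k+1) := pow_le_pow_left₀ (cl_nonneg x) (cl_le x) _

/-- There is a root `u ∈ (0.94, 0.95)` of `−log(1−u) = 2 Li₂(u)`; moreover at
`u = 0.94` we have `−log(1−u) < 2 Li₂(u)` (herd immunity holds) and at `u = 0.95`
we have `−log(1−u) > 2 Li₂(u)` (it fails), where `Li₂(u) = ∑_{k≥1} u^k/k²`. -/
theorem stmt_2 :
    (∃ u : ℝ, 0.94 < u ∧ u < 0.95 ∧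
      -Real.log (1 - u) = 2 * ∑' k : ℕ, u ^ (k + 1) / ((k : ℝ) + 1) ^ 2) ∧
    (-Real.log (1 - 0.94) < 2 * ∑' k : ℕ, (0.94 : ℝ) ^ (k + 1) / ((k : ℝ) + 1) ^ 2) ∧
    (-Real.log (1 - 0.95) > 2 * ∑' k : ℕ, (0.95 : ℝ) ^ (k + 1) / ((k : ℝ) + 1) ^ 2) := by
  have h94 : -Real.log (1 - 0.94) < 2 * ∑' k : ℕ, (0.94 : ℝ) ^ (k + 1) / ((k : ℝ) + 1) ^ 2 := by
    have := log94'
    have := li2_94_lb'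
    linarith
  have h95 : -Real.log (1 - 0.95) > 2 * ∑' k : ℕ, (0.95 : ℝ) ^ (k + 1) / ((k : ℝ) + 1) ^ 2 := by
    have := log95'
    have := li2_95_ub'
    linarith
  refine ⟨?_, h94, h95⟩
  set F : ℝ → ℝ := fun x =>
    -Real.log (1 - x) - 2 * ∑' k : ℕ, (cl x) ^ (k + 1) / ((k : ℝ) + 1) ^ 2 with hF
  have hFcont : ContinuousOn F (Icc 0.94 0.95) := by
    apply ContinuousOn.sub
    · apply ContinuousOn.neg
      apply ContinuousOn.log
      · exact (continuous_const.sub continuous_id).continuousOn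
      · intro x hx
        have := hx.2
        simp only [Set.mem_Icc] at hx
        have : x ≤ 0.95 := hx.2
        intro hzero
        have : (1:ℝ) - x > 0 := by linarith
        linarith [hzero ▸ this]
    · exact (continuous_const.mul cont_G').continuousOn
  have hivt := intermediate_value_Ioo (by norm_num : (0.94:ℝ) ≤ 0.95) hFcont
  have hF94 : F 0.94 < 0 := by
    rw [hF]
    simp only [cl_eq (le_refl (0.94:ℝ)) (by norm_num)]
    linarith
  have hF95 : 0 < F 0.95 := by
    rw [hF]
    simp only [cl_eq (by norm_num : (0.94:ℝ) ≤ 0.95) (le_refl (0.95:ℝ))]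
    linarith
  have h0mem : (0:ℝ) ∈ Set.Ioo (F 0.94) (F 0.95) := ⟨hF94, hF95⟩
  obtain ⟨u, hu, hFu⟩ := hivt h0mem
  refine ⟨u, hu.1, hu.2, ?_⟩
  rw [hF] at hFu
  simp only [cl_eq hu.1.le hu.2.le] at hFu
  linarith
end

section
/- For every u with 0 < u < 1, ∑_{k=1}^∞ 4 u^k / (k(k+1)(k+2)) = −2(1−u)² log(1−u)/u² + (3u−2)/u. That is, the generating function g₀ of the Barabási–Albert degree distribution with parameter m = 1 has this closed form on (0,1). -/
/-- For `0 < u < 1`, the generating function of the Barabási–Albert degree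
distribution with `m = 1` has the closed form
`∑_{k≥1} 4 u^k/(k(k+1)(k+2)) = −2(1−u)² log(1−u)/u² + (3u−2)/u`. -/
theorem stmt_6 (u : ℝ) (hu0 : 0 < u) (hu1 : u < 1) :
    ∑' k : ℕ, 4 * u ^ (k + 1) / (((k : ℝ) + 1) * ((k : ℝ) + 2) * ((k : ℝ) + 3))
      = -2 * (1 - u) ^ 2 * Real.log (1 - u) / u ^ 2 + (3 * u - 2) / u := by
  have hu : |u| < 1 := by rw [abs_of_pos hu0]; exact hu1
  have hu0' : u ≠ 0 := ne_of_gt hu0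
  set L := Real.log (1 - u) with hLdef
  have h1 : HasSum (fun k : ℕ => u ^ (k + 1) / ((k : ℝ) + 1)) (-L) := by
    simpa using Real.hasSum_pow_div_log_of_abs_lt_one hu
  have h2 : HasSum (fun k : ℕ => u ^ (k + 1) / ((k : ℝ) + 2)) ((-L - u) / u) := by
    have h := ((hasSum_nat_add_iff'
      (f := fun k : ℕ => u ^ (k + 1) / ((k : ℝ) + 1)) 1).mpr h1).div_const u
    have he : (fun n : ℕ => u ^ (n + 1 + 1) / (((n + 1 : ℕ) : ℝ) + 1) / u)
        = fun k : ℕ => u ^ (k + 1) / ((k : ℝ) + 2) := by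
      funext k
      have hk : ((k : ℝ) + 2) ≠ 0 := by positivity
      push_cast
      rw [pow_succ]
      field_simp
      ring
    rw [he] at h
    convert h using 2
    rfl
    norm_num
  have h3 : HasSum (fun k : ℕ => u ^ (k + 1) / ((k : ℝ) + 3))
      ((-L - u - u ^ 2 / 2) / u ^ 2) := by
    have h := ((hasSum_nat_add_iff'
      (f := fun k : ℕ => u ^ (k + 1) / ((k : ℝ) + 1)) 2).mpr h1).div_const (u ^ 2)
    have he : (fun n : ℕ => u ^ (n + 2 + 1) / (((n + 2 : ℕ) : ℝ) + 1) / u ^ 2)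
        = fun k : ℕ => u ^ (k + 1) / ((k : ℝ) + 3) := by
      funext k
      have hk : ((k : ℝ) + 3) ≠ 0 := by positivity
      push_cast
      have : u ^ (k + 2 + 1) = u ^ (k + 1) * u ^ 2 := by ring
      rw [this]
      field_simp
      ring
    rw [he] at h
    convert h using 2
    rfl
    rw [Finset.sum_range_succ, Finset.sum_range_one]
    push_cast
    ring
  have hsum : HasSum
      (fun k : ℕ => 4 * u ^ (k + 1) / (((k : ℝ) + 1) * ((k : ℝ) + 2) * ((k : ℝ) + 3)))
      (2 * (-L) - 4 * ((-L - u) / u) + 2 * ((-L - u - u ^ 2 / 2) / u ^ 2)) := by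
    have h := ((h1.mul_left 2).sub (h2.mul_left 4)).add (h3.mul_left 2)
    have he : (fun k : ℕ => 2 * (u ^ (k + 1) / ((k : ℝ) + 1))
          - 4 * (u ^ (k + 1) / ((k : ℝ) + 2)) + 2 * (u ^ (k + 1) / ((k : ℝ) + 3)))
        = fun k : ℕ =>
          4 * u ^ (k + 1) / (((k : ℝ) + 1) * ((k : ℝ) + 2) * ((k : ℝ) + 3)) := by
      funext k
      have hk1 : ((k : ℝ) + 1) ≠ 0 := by positivity
      have hk2 : ((k : ℝ) + 2) ≠ 0 := by positivity
      have hk3 : ((k : ℝ) + 3) ≠ 0 := by positivity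
      field_simp
      ring
    rw [he] at h
    exact h
  rw [hsum.tsum_eq]
  have h1u : (1 : ℝ) - u ≠ 0 := by linarith
  field_simp
  ring
end

section
/- For every u with 0 < u < 1, ∑_{k=1}^∞ (4(k−2)/((k+1)(k+2))) u^k = 4 (u² − 4u + 3u·log(1−u) − 4·log(1−u)) / u². In particular, for the Barabási–Albert degree distribution with parameter m = 1, u² g₀''(u) − u g₀'(u) ≤ 0 (the post-quarantine herd-immunity criterion) if and only if u² − 4u + 3u·log(1−u) − 4·log(1−u) ≤ 0. -/
open Real Filter Set Topology

noncomputable def F (z : ℝ) : ℝ := 3 - 2 / z - 2 * (1 - z) ^ 2 * Real.log (1 - z) / z ^ 2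

noncomputable def F1 (z : ℝ) : ℝ :=
  (2 * z + 2 * (1 - z) * z + 4 * (1 - z) * z * Real.log (1 - z)
    + 4 * (1 - z) ^ 2 * Real.log (1 - z)) / z ^ 3

noncomputable def F2 (z : ℝ) : ℝ :=
  -4 / z ^ 3 - 2 / z ^ 2 - 4 * (1 - z) / z ^ 3 - 4 * Real.log (1 - z) / z ^ 2
    - 4 / z ^ 2 - 16 * (1 - z) * Real.log (1 - z) / z ^ 3
    - 4 * (1 - z) / z ^ 3 - 12 * (1 - z) ^ 2 * Real.log (1 - z) / z ^ 4

lemma hlog_deriv {z : ℝ} (h1 : z < 1) :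
    HasDerivAt (fun z : ℝ => Real.log (1 - z)) (-(1 - z)⁻¹) z := by
  have h : (1 : ℝ) - z ≠ 0 := sub_ne_zero.2 (by linarith)
  have := (Real.hasDerivAt_log h).comp z ((hasDerivAt_id z).const_sub 1)
  exact this.congr_deriv (by simp)

lemma hasDerivAt_F {z : ℝ} (h0 : 0 < z) (h1 : z < 1) : HasDerivAt F (F1 z) z := by
  have hz : z ≠ 0 := ne_of_gt h0
  have hz2 : z ^ 2 ≠ 0 := pow_ne_zero _ hz
  have h1z : (1 : ℝ) - z ≠ 0 := sub_ne_zero.2 (by linarith)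
  have hA : HasDerivAt (fun z : ℝ => (1 - z) ^ 2) (-2 * (1 - z)) z := by
    have := ((hasDerivAt_id z).const_sub 1).pow 2
    exact this.congr_deriv (by norm_num)
  have hB := hlog_deriv h1
  have hnum : HasDerivAt (fun z : ℝ => 2 * (1 - z) ^ 2 * Real.log (1 - z))
      (2 * (-2 * (1 - z)) * Real.log (1 - z) + 2 * (1 - z) ^ 2 * (-(1 - z)⁻¹)) z := by
    have := ((hA.const_mul 2).mul hB)
    exact this.congr_deriv (by ring)
  have hden : HasDerivAt (fun z : ℝ => z ^ 2) (2 * z) z := by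
    simpa using hasDerivAt_pow 2 z
  have hq := hnum.div hden hz2
  have hinv : HasDerivAt (fun z : ℝ => 2 / z) (-(2 / z ^ 2)) z := by
    have := (hasDerivAt_inv hz).const_mul 2
    simpa [div_eq_mul_inv, mul_comm] using this
  have := (hinv.const_sub 3).sub hq
  refine this.congr_deriv ?_
  unfold F1
  field_simp
  ring

lemma hasDerivAt_F1 {z : ℝ} (h0 : 0 < z) (h1 : z < 1) : HasDerivAt F1 (F2 z) z := by
  have hz : z ≠ 0 := ne_of_gt h0
  have hz3 : z ^ 3 ≠ 0 := pow_ne_zero _ hz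
  have h1z : (1 : ℝ) - z ≠ 0 := sub_ne_zero.2 (by linarith)
  have hB := hlog_deriv h1
  have hid : HasDerivAt (fun z : ℝ => z) 1 z := hasDerivAt_id z
  have hA1 : HasDerivAt (fun z : ℝ => 1 - z) (-1) z := by
    simpa using hid.const_sub 1
  have hA2 : HasDerivAt (fun z : ℝ => (1 - z) ^ 2) (2 * (1 - z) * (-1)) z := by
    exact (hA1.pow 2).congr_deriv (by norm_num)
  -- numerator
  have hnum : HasDerivAt (fun z : ℝ => 2 * z + 2 * (1 - z) * z + 4 * (1 - z) * z * Real.log (1 - z)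
      + 4 * (1 - z) ^ 2 * Real.log (1 - z))
      (2 + (2 * (-1) * z + 2 * (1 - z) * 1)
        + ((4 * (-1) * z + 4 * (1 - z) * 1) * Real.log (1 - z)
            + 4 * (1 - z) * z * (-(1 - z)⁻¹))
        + (4 * (2 * (1 - z) * (-1)) * Real.log (1 - z) + 4 * (1 - z) ^ 2 * (-(1 - z)⁻¹))) z := by
    have h2 : HasDerivAt (fun z : ℝ => 2 * z) 2 z := by simpa using hid.const_mul 2
    have h3 : HasDerivAt (fun z : ℝ => 2 * (1 - z) * z) (2 * (-1) * z + 2 * (1 - z) * 1) z :=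
      (hA1.const_mul 2).mul hid
    have h4 : HasDerivAt (fun z : ℝ => 4 * (1 - z) * z * Real.log (1 - z))
        ((4 * (-1) * z + 4 * (1 - z) * 1) * Real.log (1 - z)
          + 4 * (1 - z) * z * (-(1 - z)⁻¹)) z :=
      ((hA1.const_mul 4).mul hid).mul hB
    have h5 : HasDerivAt (fun z : ℝ => 4 * (1 - z) ^ 2 * Real.log (1 - z))
        (4 * (2 * (1 - z) * (-1)) * Real.log (1 - z) + 4 * (1 - z) ^ 2 * (-(1 - z)⁻¹)) z :=
      (hA2.const_mul 4).mul hB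
    exact ((h2.add h3).add h4).add h5
  have hden : HasDerivAt (fun z : ℝ => z ^ 3) (3 * z ^ 2) z := by
    simpa using hasDerivAt_pow 3 z
  have hq := hnum.div hden hz3
  refine hq.congr_deriv ?_
  unfold F2
  field_simp
  ring

lemma base_sums {u : ℝ} (hu0 : 0 < u) (hu1 : u < 1) :
    HasSum (fun n : ℕ => u ^ (n + 1) / ((n : ℝ) + 1)) (-Real.log (1 - u)) ∧
    HasSum (fun n : ℕ => u ^ (n + 1) / ((n : ℝ) + 2)) ((-Real.log (1 - u) - u) / u) ∧
    HasSum (fun n : ℕ => u ^ (n + 1) / ((n : ℝ) + 3))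
      ((-Real.log (1 - u) - u - u ^ 2 / 2) / u ^ 2) := by
  have hu : |u| < 1 := by rw [abs_lt]; constructor <;> linarith
  have huz : u ≠ 0 := ne_of_gt hu0
  have hS1 : HasSum (fun n : ℕ => u ^ (n + 1) / ((n : ℝ) + 1)) (-Real.log (1 - u)) := by
    have := Real.hasSum_pow_div_log_of_abs_lt_one hu
    exact this.congr_fun (fun n => by push_cast; ring)
  refine ⟨hS1, ?_, ?_⟩
  · have hshift : HasSum (fun n : ℕ => u ^ (n + 2) / ((n : ℝ) + 2)) (-Real.log (1 - u) - u) := by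
      have h2 := (hasSum_nat_add_iff' (f := fun n : ℕ => u ^ (n + 1) / ((n : ℝ) + 1)) 1).2 hS1
      rw [Finset.sum_range_one] at h2
      have h3 := h2.congr_fun (g := fun n : ℕ => u ^ (n + 2) / ((n : ℝ) + 2))
        (fun n => by push_cast; ring_nf)
      convert h3 using 1
      · rfl
      push_cast
      ring
    have := hshift.div_const u
    exact this.congr_fun (fun n => by field_simp; ring)
  · have hshift : HasSum (fun n : ℕ => u ^ (n + 3) / ((n : ℝ) + 3))
        (-Real.log (1 - u) - u - u ^ 2 / 2) := by
      have h2 := (hasSum_nat_add_iff' (f := fun n : ℕ => u ^ (n + 1) / ((n : ℝ) + 1)) 2).2 hS1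
      rw [Finset.sum_range_succ, Finset.sum_range_one] at h2
      have h3 := h2.congr_fun (g := fun n : ℕ => u ^ (n + 3) / ((n : ℝ) + 3))
        (fun n => by push_cast; ring_nf)
      convert h3 using 1
      · rfl
      push_cast
      ring
    have := hshift.div_const (u ^ 2)
    exact this.congr_fun (fun n => by field_simp; ring)

lemma part1_hasSum {u : ℝ} (hu0 : 0 < u) (hu1 : u < 1) :
    HasSum (fun k : ℕ => (4 * (((k : ℝ) + 1) - 2) / (((k : ℝ) + 2) * ((k : ℝ) + 3))) * u ^ (k + 1))
      (4 * (u ^ 2 - 4 * u + 3 * u * Real.log (1 - u) - 4 * Real.log (1 - u)) / u ^ 2) := by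
  obtain ⟨_, hS2, hS3⟩ := base_sums hu0 hu1
  have huz : u ≠ 0 := ne_of_gt hu0
  have h := (hS2.mul_left (-12)).add (hS3.mul_left 16)
  have hval : (-12) * ((-Real.log (1 - u) - u) / u)
      + 16 * ((-Real.log (1 - u) - u - u ^ 2 / 2) / u ^ 2)
      = 4 * (u ^ 2 - 4 * u + 3 * u * Real.log (1 - u) - 4 * Real.log (1 - u)) / u ^ 2 := by
    field_simp
    ring
  rw [hval] at h
  refine h.congr_fun (fun k => ?_)
  have h2 : ((k : ℝ) + 2) ≠ 0 := by positivity
  have h3 : ((k : ℝ) + 3) ≠ 0 := by positivity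
  field_simp
  ring

lemma g0_closed {u : ℝ} (hu0 : 0 < u) (hu1 : u < 1) :
    (∑' k : ℕ, 4 * u ^ (k + 1) / (((k : ℝ) + 1) * ((k : ℝ) + 2) * ((k : ℝ) + 3))) = F u := by
  obtain ⟨hS1, hS2, hS3⟩ := base_sums hu0 hu1
  have huz : u ≠ 0 := ne_of_gt hu0
  have h := ((hS1.mul_left 2).add (hS2.mul_left (-4))).add (hS3.mul_left 2)
  have h' : HasSum (fun k : ℕ => 4 * u ^ (k + 1) / (((k : ℝ) + 1) * ((k : ℝ) + 2) * ((k : ℝ) + 3)))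
      (2 * (-Real.log (1 - u)) + (-4) * ((-Real.log (1 - u) - u) / u)
        + 2 * ((-Real.log (1 - u) - u - u ^ 2 / 2) / u ^ 2)) := by
    refine h.congr_fun (fun k => ?_)
    have h1 : ((k : ℝ) + 1) ≠ 0 := by positivity
    have h2 : ((k : ℝ) + 2) ≠ 0 := by positivity
    have h3 : ((k : ℝ) + 3) ≠ 0 := by positivity
    field_simp
    ring
  rw [h'.tsum_eq]
  unfold F
  field_simp
  ring

/-- For `0 < u < 1`,
`∑_{k≥1} (4(k−2)/((k+1)(k+2))) u^k = 4(u² − 4u + 3u log(1−u) − 4 log(1−u))/u²`,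
and for the Barabási–Albert degree distribution with `m = 1` (generating function
`g₀(z) = ∑_{k≥1} 4 z^k/(k(k+1)(k+2))`), the herd-immunity criterion
`u² g₀''(u) − u g₀'(u) ≤ 0` holds iff
`u² − 4u + 3u log(1−u) − 4 log(1−u) ≤ 0`. -/
theorem stmt_7 (u : ℝ) (hu0 : 0 < u) (hu1 : u < 1)
    (g₀ : ℝ → ℝ)
    (hg : ∀ z : ℝ, g₀ z =
      ∑' k : ℕ, 4 * z ^ (k + 1) / (((k : ℝ) + 1) * ((k : ℝ) + 2) * ((k : ℝ) + 3))) :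
    (∑' k : ℕ, (4 * (((k : ℝ) + 1) - 2) / (((k : ℝ) + 2) * ((k : ℝ) + 3))) * u ^ (k + 1)
      = 4 * (u ^ 2 - 4 * u + 3 * u * Real.log (1 - u) - 4 * Real.log (1 - u)) / u ^ 2) ∧
    (u ^ 2 * deriv (deriv g₀) u - u * deriv g₀ u ≤ 0 ↔
      u ^ 2 - 4 * u + 3 * u * Real.log (1 - u) - 4 * Real.log (1 - u) ≤ 0) := by
  have huz : u ≠ 0 := ne_of_gt hu0
  refine ⟨(part1_hasSum hu0 hu1).tsum_eq, ?_⟩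
  -- g₀ agrees with F on Ioo 0 1
  have hmem : Set.Ioo (0 : ℝ) 1 ∈ 𝓝 u := Ioo_mem_nhds hu0 hu1
  have hcl : ∀ z ∈ Set.Ioo (0 : ℝ) 1, g₀ z = F z := fun z hz => by
    rw [hg z]; exact g0_closed hz.1 hz.2
  have hd1 : ∀ z ∈ Set.Ioo (0 : ℝ) 1, deriv g₀ z = F1 z := by
    intro z hz
    have hev : g₀ =ᶠ[𝓝 z] F := eventuallyEq_of_mem (Ioo_mem_nhds hz.1 hz.2) hcl
    rw [hev.deriv_eq]
    exact (hasDerivAt_F hz.1 hz.2).deriv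
  have hderiv1 : deriv g₀ u = F1 u := hd1 u ⟨hu0, hu1⟩
  have hev2 : deriv g₀ =ᶠ[𝓝 u] F1 := eventuallyEq_of_mem hmem hd1
  have hderiv2 : deriv (deriv g₀) u = F2 u := by
    rw [hev2.deriv_eq]
    exact (hasDerivAt_F1 hu0 hu1).deriv
  rw [hderiv1, hderiv2]
  have h1z : (1 : ℝ) - u ≠ 0 := sub_ne_zero.2 (by linarith)
  have key : u ^ 2 * F2 u - u * F1 u
      = 4 * (u ^ 2 - 4 * u + 3 * u * Real.log (1 - u) - 4 * Real.log (1 - u)) / u ^ 2 := by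
    unfold F1 F2
    field_simp
    ring
  rw [key]
  have hu2 : (0 : ℝ) < u ^ 2 := by positivity
  constructor
  · intro h
    by_contra hc
    push_neg at hc
    have : 0 < 4 * (u ^ 2 - 4 * u + 3 * u * Real.log (1 - u) - 4 * Real.log (1 - u)) / u ^ 2 :=
      div_pos (by linarith) hu2
    linarith
  · intro h
    apply div_nonpos_of_nonpos_of_nonneg (by linarith) (le_of_lt hu2)
end

section
/- There exists u with 0.77 < u < 0.78 such that u² − 4u + 3u·log(1−u) − 4·log(1−u) = 0. Moreover, the expression u² − 4u + 3u·log(1−u) − 4·log(1−u) is strictly negative at u = 0.77 and strictly positive at u = 0.78. -/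
open Real Finset

lemma exp_lb : (4.3555 : ℝ) < Real.exp 1.4715 := by
  have h1 : Real.exp 1.4715 = Real.exp 1 * Real.exp 0.4715 := by
    rw [← Real.exp_add]; norm_num
  have h2 : (2.7182818283 : ℝ) < Real.exp 1 := Real.exp_one_gt_d9
  have h3 : ∑ i ∈ range 6, (0.4715:ℝ) ^ i / i.factorial ≤ Real.exp 0.4715 :=
    Real.sum_le_exp_of_nonneg (by norm_num) 6
  have h4 : (1.6023 : ℝ) ≤ ∑ i ∈ range 6, (0.4715:ℝ) ^ i / i.factorial := by
    simp [Finset.sum_range_succ, Nat.factorial]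
    norm_num
  nlinarith [Real.exp_pos (0.4715:ℝ)]

lemma exp_ub : Real.exp 1.5131 < (4.5411 : ℝ) := by
  have h1 : Real.exp 1.5131 = Real.exp 1 * Real.exp 0.5131 := by
    rw [← Real.exp_add]; norm_num
  have h2 : Real.exp 1 < 2.7182818286 := Real.exp_one_lt_d9
  have h3 : Real.exp 0.5131 ≤ (∑ m ∈ range 6, (0.5131:ℝ) ^ m / m.factorial) +
      (0.5131:ℝ) ^ 6 * (6 + 1) / ((6:ℕ).factorial * 6) :=
    Real.exp_bound' (by norm_num) (by norm_num) (by norm_num)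
  have h4 : (∑ m ∈ range 6, (0.5131:ℝ) ^ m / m.factorial) +
      (0.5131:ℝ) ^ 6 * (6 + 1) / ((6:ℕ).factorial * 6) ≤ 1.67047 := by
    simp [Finset.sum_range_succ, Nat.factorial]
    norm_num
  nlinarith [Real.exp_pos (0.5131:ℝ), Real.exp_pos (1:ℝ)]

lemma log_lb : (-1.4715 : ℝ) < Real.log 0.23 := by
  rw [Real.lt_log_iff_exp_lt (by norm_num)]
  have h : Real.exp (-1.4715) = (Real.exp 1.4715)⁻¹ := by
    rw [← Real.exp_neg]
  rw [h]
  have := exp_lb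
  rw [inv_lt_comm₀ (by positivity) (by norm_num)]
  linarith

lemma log_ub : Real.log 0.22 < (-1.5131 : ℝ) := by
  rw [Real.log_lt_iff_lt_exp (by norm_num)]
  have h : Real.exp (-1.5131) = (Real.exp 1.5131)⁻¹ := by
    rw [← Real.exp_neg]
  rw [h]
  have := exp_ub
  rw [lt_inv_comm₀ (by norm_num) (Real.exp_pos _)]
  linarith

/-- There is a root `u ∈ (0.77, 0.78)` of
`u² − 4u + 3u log(1−u) − 4 log(1−u) = 0`; moreover this expression is strictly
negative at `u = 0.77` and strictly positive at `u = 0.78`. -/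
theorem stmt_8 :
    (∃ u : ℝ, 0.77 < u ∧ u < 0.78 ∧
      u ^ 2 - 4 * u + 3 * u * Real.log (1 - u) - 4 * Real.log (1 - u) = 0) ∧
    ((0.77 : ℝ) ^ 2 - 4 * 0.77 + 3 * 0.77 * Real.log (1 - 0.77)
        - 4 * Real.log (1 - 0.77) < 0) ∧
    ((0.78 : ℝ) ^ 2 - 4 * 0.78 + 3 * 0.78 * Real.log (1 - 0.78)
        - 4 * Real.log (1 - 0.78) > 0) := by
  set f : ℝ → ℝ := fun u => u ^ 2 - 4 * u + 3 * u * Real.log (1 - u) - 4 * Real.log (1 - u)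
    with hf
  have hneg : f 0.77 < 0 := by
    have h1 : (1:ℝ) - 0.77 = 0.23 := by norm_num
    simp only [hf, h1]
    nlinarith [log_lb]
  have hpos : 0 < f 0.78 := by
    have h1 : (1:ℝ) - 0.78 = 0.22 := by norm_num
    simp only [hf, h1]
    nlinarith [log_ub]
  have hcont : ContinuousOn f (Set.Icc 0.77 0.78) := by
    have hlog : ContinuousOn (fun u : ℝ => Real.log (1 - u)) (Set.Icc 0.77 0.78) := by
      apply Real.continuousOn_log.comp (by fun_prop)
      intro x hx
      simp only [Set.mem_Icc] at hx
      simp only [Set.mem_compl_iff, Set.mem_singleton_iff]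
      intro h
      nlinarith [hx.1, hx.2]
    fun_prop
  have hsub : Set.Ioo (f 0.77) (f 0.78) ⊆ f '' Set.Ioo 0.77 0.78 :=
    intermediate_value_Ioo (by norm_num) hcont
  have h0 : (0:ℝ) ∈ Set.Ioo (f 0.77) (f 0.78) := ⟨hneg, hpos⟩
  obtain ⟨u, hu, hfu⟩ := hsub h0
  exact ⟨⟨u, hu.1, hu.2, hfu⟩, hneg, hpos⟩
end

section
/- At u = 0.77: (i) u² − 4u + 3u·log(1−u) − 4·log(1−u) < 0, so a quarantine declared at this point achieves herd immunity for the Barabási–Albert graph with m = 1; and (ii) ∑_{k=1}^∞ 4 u^k/(k(k+1)(k+2)) > 0.66, so the fraction of nodes in the Removed state at the end of this quarantine is less than 34%. -/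
/-- At `u = 0.77`: (i) `u² − 4u + 3u log(1−u) − 4 log(1−u) < 0`, so a quarantine
at this point achieves herd immunity for the BA graph with `m = 1`; and (ii)
`g₀(u) = ∑_{k≥1} 4 u^k/(k(k+1)(k+2)) > 0.66`, so the Removed fraction
`1 − g₀(u)` is less than 34%. -/
theorem stmt_9 :
    ((0.77 : ℝ) ^ 2 - 4 * 0.77 + 3 * 0.77 * Real.log (1 - 0.77)
        - 4 * Real.log (1 - 0.77) < 0) ∧
    ((∑' k : ℕ, 4 * (0.77 : ℝ) ^ (k + 1) /
        (((k : ℝ) + 1) * ((k : ℝ) + 2) * ((k : ℝ) + 3))) > 0.66) ∧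
    (1 - (∑' k : ℕ, 4 * (0.77 : ℝ) ^ (k + 1) /
        (((k : ℝ) + 1) * ((k : ℝ) + 2) * ((k : ℝ) + 3))) < 0.34) := by
  have hlog : Real.log (1 - 0.77) ≥ -1.4716 := by
    have hT : (∑ i ∈ Finset.range 6, (0.7358 : ℝ) ^ i / (Nat.factorial i : ℝ))
        ≤ Real.exp 0.7358 := Real.sum_le_exp_of_nonneg (by norm_num) 6
    have h1 : (2.0868 : ℝ) ≤ Real.exp 0.7358 := by
      refine le_trans ?_ hT
      simp [Finset.sum_range_succ]
      norm_num [Nat.factorial]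
    have hTval : (4.354 : ℝ) ≤ Real.exp 0.7358 ^ 2 := by
      nlinarith [Real.exp_pos (0.7358 : ℝ)]
    have hexp : Real.exp (-1.4716) ≤ 1 - 0.77 := by
      have h2 : Real.exp (1.4716 : ℝ) = Real.exp 0.7358 ^ 2 := by
        rw [← Real.exp_nat_mul]; norm_num
      have h3 : (4.354 : ℝ) ≤ Real.exp 1.4716 := by rw [h2]; exact hTval
      rw [Real.exp_neg, inv_le_comm₀ (Real.exp_pos _) (by norm_num)]
      have : ((1 : ℝ) - 0.77)⁻¹ ≤ 4.354 := by norm_num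
      linarith
    have := (Real.le_log_iff_exp_le (by norm_num : (0:ℝ) < 1 - 0.77)).mpr hexp
    linarith
  have h1 : ((0.77 : ℝ) ^ 2 - 4 * 0.77 + 3 * 0.77 * Real.log (1 - 0.77)
      - 4 * Real.log (1 - 0.77) < 0) := by
    have hub : Real.log (1 - 0.77) < 0 := by
      apply Real.log_neg <;> norm_num
    nlinarith
  have hsummable : Summable (fun k : ℕ => 4 * (0.77 : ℝ) ^ (k + 1) /
      (((k : ℝ) + 1) * ((k : ℝ) + 2) * ((k : ℝ) + 3))) := by
    apply Summable.of_nonneg_of_le (fun k => by positivity) ?_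
      ((summable_geometric_of_lt_one (r := (0.77:ℝ)) (by norm_num) (by norm_num)).mul_left 4)
    intro k
    have hd : (1 : ℝ) ≤ (((k : ℝ) + 1) * ((k : ℝ) + 2) * ((k : ℝ) + 3)) := by
      have h0 : (0:ℝ) ≤ (k:ℝ) := Nat.cast_nonneg k
      calc (1:ℝ) = 1 * 1 * 1 := by norm_num
        _ ≤ ((k:ℝ) + 1) * ((k:ℝ) + 2) * ((k:ℝ) + 3) := by gcongr <;> linarith
    calc 4 * (0.77 : ℝ) ^ (k + 1) / (((k : ℝ) + 1) * ((k : ℝ) + 2) * ((k : ℝ) + 3))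
        ≤ 4 * (0.77 : ℝ) ^ (k + 1) / 1 := by
          apply div_le_div_of_nonneg_left (by positivity) (by norm_num) hd
      _ = 4 * ((0.77:ℝ) * 0.77 ^ k) := by ring
      _ ≤ 4 * (0.77:ℝ) ^ k := by
          have : (0.77:ℝ) * 0.77 ^ k ≤ 1 * 0.77 ^ k :=
            mul_le_mul_of_nonneg_right (by norm_num) (by positivity)
          linarith
  have hlow : (∑ k ∈ Finset.range 15, 4 * (0.77 : ℝ) ^ (k + 1) /
      (((k : ℝ) + 1) * ((k : ℝ) + 2) * ((k : ℝ) + 3))) ≤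
      (∑' k : ℕ, 4 * (0.77 : ℝ) ^ (k + 1) /
      (((k : ℝ) + 1) * ((k : ℝ) + 2) * ((k : ℝ) + 3))) :=
    Summable.sum_le_tsum _ (fun i _ => by positivity) hsummable
  have hval : (0.66 : ℝ) < (∑ k ∈ Finset.range 15, 4 * (0.77 : ℝ) ^ (k + 1) /
      (((k : ℝ) + 1) * ((k : ℝ) + 2) * ((k : ℝ) + 3))) := by
    norm_num [Finset.sum_range_succ]
  refine ⟨h1, by linarith, by linarith⟩
end

section
/- Let d be a natural number with d > 2 and let g₀ : ℝ → ℝ be g₀(x) = x^d. Then for every u with 0 < u ≤ 1, u² g₀''(u) − u g₀'(u) = d(d−2) u^d > 0. Hence the herd-immunity criterion u² g₀''(u) − u g₀'(u) ≤ 0 is never satisfied for a random d-regular graph, so quarantining cannot immunize a random d-regular graph. -/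
/-- For a random `d`-regular graph with `d > 2` (generating function
`g₀(x) = x^d`), for every `0 < u ≤ 1` we have
`u² g₀''(u) − u g₀'(u) = d(d−2) u^d > 0`: the herd-immunity criterion is never
satisfied, so quarantining cannot immunize a random `d`-regular graph. -/
theorem stmt_11 (d : ℕ) (hd : 2 < d) (g₀ : ℝ → ℝ) (hg : ∀ x : ℝ, g₀ x = x ^ d)
    (u : ℝ) (hu0 : 0 < u) (hu1 : u ≤ 1) :
    (u ^ 2 * deriv (deriv g₀) u - u * deriv g₀ u
      = (d : ℝ) * ((d : ℝ) - 2) * u ^ d) ∧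
    0 < u ^ 2 * deriv (deriv g₀) u - u * deriv g₀ u := by
  have hg' : g₀ = fun x : ℝ => x ^ d := funext hg
  subst hg'
  have h1 : deriv (fun x : ℝ => x ^ d) = fun x : ℝ => (d : ℝ) * x ^ (d - 1) := by
    funext x; simp [deriv_pow]
  rw [h1]
  have h2 : deriv (fun x : ℝ => (d : ℝ) * x ^ (d - 1)) u
      = (d : ℝ) * ((d - 1 : ℕ) * u ^ (d - 1 - 1)) := by
    rw [deriv_const_mul _ (differentiable_pow (d-1)).differentiableAt, deriv_pow_field]
  rw [h2]
  have hd1 : 1 ≤ d := by omega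
  have key : u ^ 2 * ((d : ℝ) * ((d - 1 : ℕ) * u ^ (d - 1 - 1))) - u * ((d : ℝ) * u ^ (d - 1))
      = (d : ℝ) * ((d : ℝ) - 2) * u ^ d := by
    have e1 : u ^ 2 * u ^ (d - 1 - 1) = u ^ d := by
      rw [← pow_add]; congr 1; omega
    have e2 : u * u ^ (d - 1) = u ^ d := by
      rw [← pow_succ']; congr 1; omega
    have e3 : ((d - 1 : ℕ) : ℝ) = (d : ℝ) - 1 := by
      push_cast [hd1]; ring
    calc u ^ 2 * ((d : ℝ) * ((d - 1 : ℕ) * u ^ (d - 1 - 1))) - u * ((d : ℝ) * u ^ (d - 1))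
        = (d : ℝ) * ((d - 1 : ℕ) : ℝ) * (u ^ 2 * u ^ (d - 1 - 1))
          - (d : ℝ) * (u * u ^ (d - 1)) := by ring
      _ = (d : ℝ) * ((d : ℝ) - 1) * u ^ d - (d : ℝ) * u ^ d := by rw [e1, e2, e3]
      _ = (d : ℝ) * ((d : ℝ) - 2) * u ^ d := by ring
  refine ⟨key, ?_⟩
  rw [key]
  have : (0 : ℝ) < (d : ℝ) - 2 := by
    have : (2 : ℝ) < (d : ℝ) := by exact_mod_cast hd
    linarith
  positivity
end
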